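/- For all integers k ≥ 1 and n ≥ 1, the unique zero ρ_k of Q_k(z) = 1 − 2z + z^k(1−z) in the closed unit disk satisfies exp(−n/2^k) < (2ρ_k)^{-n} < exp(−n/2^{k+2}). -/

import Mathlib

/-!
With `x = 2ρ - 1`, the equation `Q_k(ρ) = 0` reads `x = ρ^k (1 - ρ)`. Since `Q_k` is strictly
decreasing on `[0, 1]` and negative at `(1 + 2^{-k})/2` (as `(1 + 2^{-k})^k ≤ √e < 2`),
we get `x < 2^{-k}`, so `2ρ = 1 + x < exp(2^{-k})`. Conversely
`2^k x = (2ρ)^k (1 - ρ) > 1 - ρ`, which forces `x > 1/(2^{k+1} + 1)` and hence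
`exp(2^{-k-2}) < 1/(1 - 2^{-k-2}) ≤ 1 + x`. Raising both bounds on `2ρ` to the `n`-th power
gives the claim.
-/

open Real Set

def Q (k : ℕ) (t : ℝ) : ℝ := 1 - 2 * t + t ^ k * (1 - t)

lemma two_mul_le_two_pow (k : ℕ) : 2 * k ≤ 2 ^ k := by
  cases k with
  | zero => simp
  | succ k => rw [pow_succ']; have := k.lt_two_pow_self; omega

lemma one_div_two_pow_le_one (k : ℕ) : (1 / 2 ^ k : ℝ) ≤ 1 :=
  (div_le_one (by positivity)).mpr (one_le_pow₀ one_le_two)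

lemma natCast_mul_pow_pred_mul_one_sub_le {t : ℝ} (h0 : 0 ≤ t) (h1 : t ≤ 1) (k : ℕ) :
    k * t ^ (k - 1) * (1 - t) ≤ 1 - t ^ k := by
  have hsum : (k : ℝ) * t ^ (k - 1) ≤ ∑ i ∈ Finset.range k, t ^ i := by
    simpa using Finset.card_nsmul_le_sum (Finset.range k) (t ^ ·) (t ^ (k - 1))
      fun i hi ↦ pow_le_pow_of_le_one h0 h1 (by grind)
  rw [← geom_sum_mul_neg]
  exact mul_le_mul_of_nonneg_right hsum (by linarith)

lemma Q_strictAntiOn (k : ℕ) : StrictAntiOn (Q k) (Icc 0 1) := by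
  refine strictAntiOn_of_deriv_neg (convex_Icc 0 1) (by unfold Q; fun_prop) fun t ht ↦ ?_
  rw [interior_Icc] at ht
  have hderiv : HasDerivAt (Q k) (-2 + (k * t ^ (k - 1) * (1 - t) - t ^ k)) t := by
    have h := (((hasDerivAt_id' t).const_mul 2).const_sub 1).add
      ((hasDerivAt_pow k t).mul ((hasDerivAt_id' t).const_sub 1))
    exact h.congr_deriv (by ring)
  rw [hderiv.deriv]
  have := natCast_mul_pow_pred_mul_one_sub_le ht.1.le ht.2.le k
  have := pow_nonneg ht.1.le k
  linarith

lemma one_add_one_div_two_pow_pow_lt_two (k : ℕ) : (1 + 1 / 2 ^ k : ℝ) ^ k < 2 := by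
  have hk : (k : ℝ) * (1 / 2 ^ k) ≤ 1 / 2 := by
    rw [mul_one_div, div_le_div_iff₀ (by positivity) two_pos]
    have := two_mul_le_two_pow k
    norm_cast; omega
  calc (1 + 1 / 2 ^ k : ℝ) ^ k ≤ exp (1 / 2 ^ k) ^ k := by
        gcongr; linarith [add_one_le_exp (1 / 2 ^ k : ℝ)]
    _ = exp (k * (1 / 2 ^ k)) := (exp_nat_mul _ k).symm
    _ ≤ exp (1 / 2) := exp_le_exp.mpr hk
    _ < 1 / (1 - 1 / 2) := exp_bound_div_one_sub_of_interval' (by norm_num) (by norm_num)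
    _ = 2 := by norm_num

lemma Q_one_add_one_div_two_pow_div_two_neg (k : ℕ) : Q k ((1 + 1 / 2 ^ k) / 2) < 0 := by
  set a : ℝ := 1 / 2 ^ k with ha
  have ha0 : 0 < a := by positivity
  have ha1 : a ≤ 1 := one_div_two_pow_le_one k
  have hQ : Q k ((1 + a) / 2) = a * ((1 + a) ^ k * (1 - a) / 2 - 1) := by
    simp only [Q, div_pow, ha]; field_simp; ring
  rw [hQ]
  refine mul_neg_of_pos_of_neg ha0 ?_
  have := one_add_one_div_two_pow_pow_lt_two k
  nlinarith [pow_pos (by linarith : (0:ℝ) < 1 + a) k]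

lemma two_mul_lt_of_Q_eq_zero {k : ℕ} {r : ℝ} (hr : r ∈ Icc 0 1) (hQ : Q k r = 0) :
    2 * r < 1 + 1 / 2 ^ k := by
  set c : ℝ := (1 + 1 / 2 ^ k) / 2
  have hc : c ∈ Icc 0 1 := by
    have := one_div_two_pow_le_one k
    constructor <;> simp only [c] <;> linarith [show (0 : ℝ) < 1 / 2 ^ k by positivity]
  by_contra! hcr
  have := (Q_strictAntiOn k).antitoneOn hc hr (by simp only [c]; linarith)
  linarith [Q_one_add_one_div_two_pow_div_two_neg k]

lemma one_sub_lt_two_pow_mul_of_Q_eq_zero {k : ℕ} (hk : k ≠ 0) {r : ℝ} (h_half : 1 / 2 < r)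
    (h_one : r < 1) (hQ : Q k r = 0) : 1 - r < 2 ^ k * (2 * r - 1) := by
  have hroot : 2 * r - 1 = r ^ k * (1 - r) := by unfold Q at hQ; linarith
  calc 1 - r < (2 * r) ^ k * (1 - r) :=
        lt_mul_of_one_lt_left (by linarith) (one_lt_pow₀ (by linarith) hk)
    _ = 2 ^ k * (2 * r - 1) := by rw [hroot]; ring

lemma exp_one_div_four_mul_lt {p r : ℝ} (hp : 1 ≤ p) (h : 1 - r < p * (2 * r - 1)) :
    exp (1 / (4 * p)) < 2 * r := by
  have hp' : 1 / (4 * p) < 1 := by rw [div_lt_one (by positivity)]; linarith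
  calc exp (1 / (4 * p)) < 1 / (1 - 1 / (4 * p)) :=
        exp_bound_div_one_sub_of_interval' (by positivity) hp'
    _ = 4 * p / (4 * p - 1) := by field_simp
    _ ≤ 2 * r := by
        rw [div_le_iff₀ (by linarith)]
        nlinarith

lemma exp_neg_div_eq_one_div_pow (n : ℕ) (q : ℝ) : exp (-n / q) = 1 / exp (1 / q) ^ n := by
  rw [← exp_nat_mul, one_div (exp _), ← exp_neg]
  ring_nf

theorem rho_power_bounds_general
    (ρ : ℕ → ℝ)
    (hρ_mem : ∀ k, 1 ≤ k → 1 / 2 < ρ k ∧ ρ k < 1)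
    (hρ_root : ∀ k, 1 ≤ k → 1 - 2 * ρ k + (ρ k) ^ k * (1 - ρ k) = 0) :
    ∀ k : ℕ, 1 ≤ k → ∀ n : ℕ, 1 ≤ n →
      Real.exp (-(n : ℝ) / 2 ^ k) < 1 / (2 * ρ k) ^ n ∧
      1 / (2 * ρ k) ^ n < Real.exp (-(n : ℝ) / 2 ^ (k + 2)) := by
  intro k hk n hn
  obtain ⟨h_half, h_one⟩ := hρ_mem k hk
  have hQ : Q k (ρ k) = 0 := hρ_root k hk
  have h_upper : 2 * ρ k < exp (1 / 2 ^ k) :=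
    (two_mul_lt_of_Q_eq_zero ⟨by linarith, h_one.le⟩ hQ).trans_le
      (by linarith [add_one_le_exp (1 / 2 ^ k)])
  have h_lower : exp (1 / 2 ^ (k + 2)) < 2 * ρ k := by
    rw [pow_add, mul_comm, show (2 : ℝ) ^ 2 = 4 by norm_num]
    exact exp_one_div_four_mul_lt (one_le_pow₀ one_le_two)
      (one_sub_lt_two_pow_mul_of_Q_eq_zero (by omega) h_half h_one hQ)
  rw [exp_neg_div_eq_one_div_pow, exp_neg_div_eq_one_div_pow]
  exact ⟨one_div_lt_one_div_of_lt (by positivity)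
      (pow_lt_pow_left₀ h_upper (by linarith) (by omega)),
    one_div_lt_one_div_of_lt (by positivity)
      (pow_lt_pow_left₀ h_lower (by positivity) (by omega))⟩

/-- **Lemma 2 (exponential bounds).** For all `k ≥ 1` and `n ≥ 1`, the unique zero `ρ k` of
`Q_k(z) = 1 − 2z + z^k(1−z)` in the closed unit disk satisfies
`exp(−n/2^k) < (2ρ_k)^{-n} < exp(−n/2^{k+2})`. -/
theorem rho_power_bounds
    (ρ : ℕ → ℝ)
    (hρ_mem : ∀ k, 1 ≤ k → 1 / 2 < ρ k ∧ ρ k < 1)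
    (hρ_root : ∀ k, 1 ≤ k → 1 - 2 * ρ k + (ρ k) ^ k * (1 - ρ k) = 0)
    (hρ_unique : ∀ k, 1 ≤ k → ∀ z : ℂ, ‖z‖ ≤ 1 →
      1 - 2 * z + z ^ k * (1 - z) = 0 → z = (ρ k : ℂ)) :
    ∀ k : ℕ, 1 ≤ k → ∀ n : ℕ, 1 ≤ n →
      Real.exp (-(n : ℝ) / 2 ^ k) < 1 / (2 * ρ k) ^ n ∧
      1 / (2 * ρ k) ^ n < Real.exp (-(n : ℝ) / 2 ^ (k + 2)) :=
  rho_power_bounds_general ρ hρ_mem hρ_root
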